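/- Let f : α → ℝ be a function (the value of a temporal fluent at each time t), let f₀ : ℝ be a fixed value (its initial value), and let Φ : α → ℝ → Prop and Ψ : Prop. Assume (uniqueness) ∀ t y y', Φ t y → Φ t y' → y = y', and assume Ψ holds iff some context holds, formalized as: ∀ t, (∃ y, Φ t y) ↔ Ψ. Then the conjunction of the two axioms (∀ t y, Φ t y → f t = y) and (∀ t, f t ≠ f₀ → ∃ y, Φ t y) is logically equivalent to the single biconditional ∀ t y, f t = y ↔ (Φ t y ∨ (y = f₀ ∧ ¬ Ψ)). -/
import Mathlib


theorem stmt_0 {α : Type*} (f : α → ℝ) (f₀ : ℝ) (Φ : α → ℝ → Prop) (Ψ : Prop)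
    (huniq : ∀ t y y', Φ t y → Φ t y' → y = y')
    (hctx : ∀ t, (∃ y, Φ t y) ↔ Ψ) :
    ((∀ t y, Φ t y → f t = y) ∧ (∀ t, f t ≠ f₀ → ∃ y, Φ t y)) ↔
      (∀ t y, f t = y ↔ (Φ t y ∨ (y = f₀ ∧ ¬ Ψ))) := by
  constructor
  · rintro ⟨h1, h2⟩ t y
    constructor
    · rintro rfl
      by_cases hΨ : Ψ
      · obtain ⟨y', hy'⟩ := (hctx t).mpr hΨ
        exact Or.inl ((h1 t y' hy') ▸ hy')
      · by_cases hf : f t = f₀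
        · exact Or.inr ⟨hf, hΨ⟩
        · exact absurd ((hctx t).mp (h2 t hf)) hΨ
    · rintro (h | ⟨rfl, hΨ⟩)
      · exact h1 t y h
      · by_contra hf
        exact hΨ ((hctx t).mp (h2 t hf))
  · intro h
    refine ⟨fun t y hy => (h t y).mpr (Or.inl hy), fun t hf => ?_⟩
    rcases (h t (f t)).mp rfl with h' | ⟨h', _⟩
    · exact ⟨f t, h'⟩
    · exact absurd h' hf
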